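/- Let 1 \leq K \leq N and M \geq 1 be integers and L \geq 0 a real number. Let W_1,\dots,W_M, Q, and A_\theta^{(i)} (for \theta \in [M], i \in [N]) be random variables; for \Lambda \subseteq [M] write W_\Lambda = (W_j)_{j\in\Lambda}. Assume: (i) H(A_\theta^\Gamma | W_\Lambda, Q) = H(A_{\theta'}^\Gamma | W_\Lambda, Q) for all \theta, \theta' \in [M], all \Lambda \subseteq [M], and all \Gamma \subseteq [N] with |\Gamma| = K; (ii) H(W_\theta | A_\theta^{[N]}, W_\Lambda, Q) = 0 for all \theta \in [M] and all \Lambda \subseteq [M]; (iii) H(W_\theta | W_\Lambda, Q) = L for all \Lambda \subseteq [M] and all \theta \in [M] \setminus \Lambda; (iv) H(A_\theta^{[N]} | W_{[M]}, Q) = 0 for all \theta \in [M]. Then for every \theta \in [M], \sum_{i=1}^{N} H(A_\theta^{(i)}) \geq L \cdot \sum_{i=0}^{M-1} (K/N)^i; in particular, when L > 0, the PIR rate L / \sum_{i=1}^{N} H(A_\theta^{(i)}) is at most (1 + K/N + (K/N)^2 + \dots + (K/N)^{M-1})^{-1}. -/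

import Mathlib

/-- Shannon entropy (natural logarithm) of a finitely-valued random variable `X`
on a finite probability space with probability mass function `μ`. -/
noncomputable def entropy {Ω V : Type*} [Fintype Ω] [Fintype V] [DecidableEq V]
    (μ : Ω → ℝ) (X : Ω → V) : ℝ :=
  ∑ v : V, Real.negMulLog (∑ ω ∈ Finset.univ.filter (fun ω => X ω = v), μ ω)

/-- Conditional Shannon entropy `H(X | Y) = H(X, Y) - H(Y)`. -/
noncomputable def condEntropy {Ω V U : Type*} [Fintype Ω] [Fintype V] [Fintype U]
    [DecidableEq V] [DecidableEq U] (μ : Ω → ℝ) (X : Ω → V) (Y : Ω → U) : ℝ :=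
  entropy μ (fun ω => (X ω, Y ω)) - entropy μ Y

/-- The joint random variable `(A i)_{i ∈ Γ}` of the subfamily of `(A i)_{i ∈ [N]}`
indexed by the subset `Γ`. -/
def jointOn {Ω V : Type*} {N : ℕ} (Γ : Finset (Fin N)) (A : Fin N → Ω → V) :
    Ω → (Fin N → Option V) :=
  fun ω i => if i ∈ Γ then some (A i ω) else none

/-!
Write `H(A_θ | Λ)` for `H(A_θ^{[N]} | W_Λ, Q)`. If `θ ∉ Λ`, the answers `A_θ` determine
`W_θ` and `W_θ` carries `L` fresh units of entropy, so `H(A_θ | Λ) = L + H(A_θ | Λ ∪ {θ})`.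
Shearer's lemma over the `N` cyclic windows of `K` consecutive servers, together with the
symmetry of all `K`-subsets of answers, gives `(K/N) H(A_θ' | Λ) ≤ H(A_θ | Λ)` for every `θ'`.
Iterating these two facts over the `M` records, starting from `Λ = ∅`, yields
`L (1 + K/N + ⋯ + (K/N)^{M-1}) ≤ H(A_θ | ∅) ≤ ∑ᵢ H(A_θ^{(i)})`.
-/

open Finset Real

theorem sum_mul_log_le_sum_mul_log {ι : Type*} (s : Finset ι) {p q : ι → ℝ}
    (hp : ∀ i ∈ s, 0 ≤ p i) (hq : ∀ i ∈ s, 0 ≤ q i) (hpq : ∀ i ∈ s, 0 < p i → 0 < q i)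
    (hsum : ∑ i ∈ s, q i ≤ ∑ i ∈ s, p i) :
    ∑ i ∈ s, p i * log (q i) ≤ ∑ i ∈ s, p i * log (p i) := by
  have hterm : ∀ i ∈ s, p i * log (q i) - p i * log (p i) ≤ q i - p i := by
    intro i hi
    rcases (hp i hi).eq_or_lt with hp0 | hp0
    · simp [← hp0, hq i hi]
    · have hq0 := hpq i hi hp0
      have hlog := log_le_sub_one_of_pos (div_pos hq0 hp0)
      rw [log_div hq0.ne' hp0.ne'] at hlog
      calc p i * log (q i) - p i * log (p i) = p i * (log (q i) - log (p i)) := by ring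
        _ ≤ p i * (q i / p i - 1) := mul_le_mul_of_nonneg_left hlog hp0.le
        _ = q i - p i := by field_simp
  have := sum_le_sum hterm
  rw [sum_sub_distrib, sum_sub_distrib] at this
  linarith

/-- Nonnegativity of mutual information, for an unnormalised joint distribution `a`. -/
theorem sum_mul_log_marginals_le {V U : Type*} [Fintype V] [Fintype U] (a : V → U → ℝ)
    (ha : ∀ v u, 0 ≤ a v u) :
    ∑ v, (∑ u, a v u) * log (∑ u, a v u) + ∑ u, (∑ v, a v u) * log (∑ v, a v u) ≤
      ∑ v, ∑ u, a v u * log (a v u) + (∑ v, ∑ u, a v u) * log (∑ v, ∑ u, a v u) := by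
  set b : V → ℝ := fun v => ∑ u, a v u
  set c : U → ℝ := fun u => ∑ v, a v u
  set d : ℝ := ∑ v, ∑ u, a v u
  have hb0 : ∀ v, 0 ≤ b v := fun v => sum_nonneg fun u _ => ha v u
  have hab : ∀ v u, a v u ≤ b v := fun v u => single_le_sum (fun u _ => ha v u) (mem_univ u)
  have hac : ∀ v u, a v u ≤ c u := fun v u => single_le_sum (fun v _ => ha v u) (mem_univ v)
  have hbd : ∀ v, b v ≤ d := fun v => single_le_sum (fun v _ => hb0 v) (mem_univ v)
  have hsplit : ∀ v u, a v u * log (b v * c u / d) =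
      a v u * log (b v) + a v u * log (c u) - a v u * log d := by
    intro v u
    rcases (ha v u).eq_or_lt with h0 | h0
    · simp [← h0]
    have hbpos := h0.trans_le (hab v u)
    have hcpos := h0.trans_le (hac v u)
    rw [log_div (mul_pos hbpos hcpos).ne' (hbpos.trans_le (hbd v)).ne',
      log_mul hbpos.ne' hcpos.ne']
    ring
  -- Gibbs' inequality against the product `b ⊗ c / d` of the marginals
  have hgibbs := sum_mul_log_le_sum_mul_log (univ : Finset (V × U))
    (p := fun x => a x.1 x.2) (q := fun x => b x.1 * c x.2 / d) (fun _ _ => ha _ _)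
    (fun x _ => div_nonneg (mul_nonneg (hb0 _) ((ha x.1 x.2).trans (hac _ _)))
      ((hb0 x.1).trans (hbd _)))
    (fun x _ hx => div_pos (mul_pos (hx.trans_le (hab _ _)) (hx.trans_le (hac _ _)))
      (hx.trans_le ((hab _ _).trans (hbd _))))
    (by simp only [Fintype.sum_prod_type, ← sum_div, ← mul_sum, ← sum_mul,
          show ∑ u, c u = d from sum_comm]
        exact (mul_self_div_self d).le)
  simp only [Fintype.sum_prod_type, hsplit, sum_sub_distrib, sum_add_distrib] at hgibbs
  have hbsum : ∑ v, ∑ u, a v u * log (b v) = ∑ v, b v * log (b v) := by simp only [b, sum_mul]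
  have hcsum : ∑ v, ∑ u, a v u * log (c u) = ∑ u, c u * log (c u) := by
    rw [sum_comm]; simp only [c, sum_mul]
  have hdsum : ∑ v, ∑ u, a v u * log d = d * log d := by simp only [d, sum_mul]
  linarith

theorem sum_negMulLog_marginals_le {V U : Type*} [Fintype V] [Fintype U] (a : V → U → ℝ)
    (ha : ∀ v u, 0 ≤ a v u) :
    ∑ v, ∑ u, negMulLog (a v u) + negMulLog (∑ v, ∑ u, a v u) ≤
      ∑ v, negMulLog (∑ u, a v u) + ∑ u, negMulLog (∑ v, a v u) := by
  have := sum_mul_log_marginals_le a ha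
  simp only [negMulLog, neg_mul, sum_neg_distrib]
  linarith

section Entropy

variable {Ω : Type*} [Fintype Ω] {μ : Ω → ℝ}
variable {V U T : Type*} [Fintype V] [Fintype U] [Fintype T] [DecidableEq V] [DecidableEq U]
  [DecidableEq T]

theorem entropy_eq_neg_sum_mul_log (X : Ω → V) :
    entropy μ X = -∑ ω, μ ω * log (∑ ω' ∈ univ.filter (fun ω' => X ω' = X ω), μ ω') := by
  rw [entropy, ← sum_neg_distrib, ← sum_fiberwise univ X]
  refine sum_congr rfl fun v _ => ?_
  rw [negMulLog, neg_mul, sum_mul, ← sum_neg_distrib]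
  refine sum_congr rfl fun ω hω => ?_
  rw [(mem_filter.1 hω).2]

theorem entropy_congr {X : Ω → V} {Y : Ω → U} (h : ∀ ω ω', X ω = X ω' ↔ Y ω = Y ω') :
    entropy μ X = entropy μ Y := by
  simp only [entropy_eq_neg_sum_mul_log, h]

theorem entropy_le_of_determines (hμ : ∀ ω, 0 ≤ μ ω) {X : Ω → V} {Y : Ω → U}
    (h : ∀ ω ω', X ω = X ω' → Y ω = Y ω') : entropy μ Y ≤ entropy μ X := by
  rw [entropy_eq_neg_sum_mul_log, entropy_eq_neg_sum_mul_log, neg_le_neg_iff]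
  refine sum_le_sum fun ω _ => ?_
  rcases (hμ ω).eq_or_lt with h0 | h0
  · simp [← h0]
  have hX : μ ω ≤ ∑ ω' ∈ univ.filter (fun ω' => X ω' = X ω), μ ω' :=
    single_le_sum (fun ω' _ => hμ ω') (by simp)
  refine mul_le_mul_of_nonneg_left (log_le_log (h0.trans_le hX) ?_) h0.le
  exact sum_le_sum_of_subset_of_nonneg (fun ω' => by simpa using h ω' ω) fun ω' _ _ => hμ ω'

theorem entropy_const (hμ1 : ∑ ω, μ ω = 1) : entropy μ (fun _ => ()) = 0 := by
  simp [entropy, hμ1]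

theorem sum_sum_filter_and_eq (P : Ω → Prop) [DecidablePred P] (Y : Ω → U) :
    ∑ u, ∑ ω ∈ univ.filter (fun ω => P ω ∧ Y ω = u), μ ω = ∑ ω ∈ univ.filter P, μ ω := by
  simp only [← sum_fiberwise (univ.filter P) Y μ, filter_filter]

theorem entropy_submodular (hμ : ∀ ω, 0 ≤ μ ω) (X : Ω → V) (Y : Ω → U) (Z : Ω → T) :
    entropy μ (fun ω => (Z ω, X ω, Y ω)) + entropy μ Z ≤
      entropy μ (fun ω => (Z ω, X ω)) + entropy μ (fun ω => (Z ω, Y ω)) := by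
  set a : T → V → U → ℝ :=
    fun t v u => ∑ ω ∈ univ.filter (fun ω => Z ω = t ∧ X ω = v ∧ Y ω = u), μ ω with ha
  have hZXY : entropy μ (fun ω => (Z ω, X ω, Y ω)) = ∑ t, ∑ v, ∑ u, negMulLog (a t v u) := by
    simp only [entropy, Fintype.sum_prod_type, Prod.mk.injEq, ha]
  have hZX : entropy μ (fun ω => (Z ω, X ω)) = ∑ t, ∑ v, negMulLog (∑ u, a t v u) := by
    simp only [entropy, Fintype.sum_prod_type, Prod.mk.injEq, ha, ← and_assoc,
      sum_sum_filter_and_eq]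
  have hZY : entropy μ (fun ω => (Z ω, Y ω)) = ∑ t, ∑ u, negMulLog (∑ v, a t v u) := by
    have ha' : ∀ t v u,
        a t v u = ∑ ω ∈ univ.filter (fun ω => (Z ω = t ∧ Y ω = u) ∧ X ω = v), μ ω :=
      fun t v u => sum_congr (filter_congr fun ω _ => by tauto) fun _ _ => rfl
    simp only [entropy, Fintype.sum_prod_type, Prod.mk.injEq, ha', sum_sum_filter_and_eq]
  have hZ : entropy μ Z = ∑ t, negMulLog (∑ v, ∑ u, a t v u) := by
    simp only [entropy, ha, ← and_assoc, sum_sum_filter_and_eq]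
  rw [hZXY, hZX, hZY, hZ, ← sum_add_distrib, ← sum_add_distrib]
  exact sum_le_sum fun t _ => sum_negMulLog_marginals_le (a t) fun v u => sum_nonneg fun ω _ => hμ ω

end Entropy

section CondEntropy

variable {Ω : Type*} [Fintype Ω] {μ : Ω → ℝ}
variable {V V' U U' T : Type*} [Fintype V] [Fintype V'] [Fintype U] [Fintype U'] [Fintype T]
  [DecidableEq V] [DecidableEq V'] [DecidableEq U] [DecidableEq U'] [DecidableEq T]

theorem condEntropy_congr {X : Ω → V} {X' : Ω → V'} {Y : Ω → U} {Y' : Ω → U'}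
    (hX : ∀ ω ω', X ω = X ω' ↔ X' ω = X' ω') (hY : ∀ ω ω', Y ω = Y ω' ↔ Y' ω = Y' ω') :
    condEntropy μ X Y = condEntropy μ X' Y' := by
  rw [condEntropy, condEntropy, entropy_congr hY,
    entropy_congr (X := fun ω => (X ω, Y ω)) (Y := fun ω => (X' ω, Y' ω))
      fun ω ω' => by simp only [Prod.ext_iff, hX, hY]]

theorem condEntropy_nonneg (hμ : ∀ ω, 0 ≤ μ ω) (X : Ω → V) (Y : Ω → U) :
    0 ≤ condEntropy μ X Y :=
  sub_nonneg.2 <| entropy_le_of_determines hμ fun _ _ h => (Prod.ext_iff.1 h).2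

theorem condEntropy_const (v : V) (Y : Ω → U) : condEntropy μ (fun _ => v) Y = 0 := by
  rw [condEntropy, entropy_congr (Y := Y) fun ω ω' => by simp, sub_self]

theorem condEntropy_pair_eq_add (X : Ω → V) (Y : Ω → U) (Z : Ω → T) :
    condEntropy μ (fun ω => (X ω, Y ω)) Z =
      condEntropy μ X (fun ω => (Y ω, Z ω)) + condEntropy μ Y Z := by
  have hassoc : entropy μ (fun ω => ((X ω, Y ω), Z ω)) = entropy μ (fun ω => (X ω, Y ω, Z ω)) :=
    entropy_congr fun ω ω' => by simp only [Prod.ext_iff, and_assoc]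
  rw [condEntropy, condEntropy, condEntropy, hassoc]
  ring

theorem condEntropy_eq_add_of_condEntropy_eq_zero {X : Ω → V} {Y : Ω → U} {Z : Ω → T}
    (h : condEntropy μ Y (fun ω => (X ω, Z ω)) = 0) :
    condEntropy μ X Z = condEntropy μ Y Z + condEntropy μ X (fun ω => (Y ω, Z ω)) := by
  have hswap : condEntropy μ (fun ω => (X ω, Y ω)) Z = condEntropy μ (fun ω => (Y ω, X ω)) Z :=
    condEntropy_congr (fun ω ω' => by simp only [Prod.ext_iff, and_comm]) fun _ _ => Iff.rfl
  rw [condEntropy_pair_eq_add, condEntropy_pair_eq_add, h] at hswap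
  linarith

theorem condEntropy_le_of_determines_left (hμ : ∀ ω, 0 ≤ μ ω) {X : Ω → V} {X' : Ω → V'}
    (h : ∀ ω ω', X ω = X ω' → X' ω = X' ω') (Y : Ω → U) :
    condEntropy μ X' Y ≤ condEntropy μ X Y :=
  sub_le_sub_right (entropy_le_of_determines hμ fun ω ω' hω => by
    rw [Prod.ext_iff] at hω ⊢; exact ⟨h ω ω' hω.1, hω.2⟩) _

theorem condEntropy_le_of_determines_right (hμ : ∀ ω, 0 ≤ μ ω) (X : Ω → V) {Y : Ω → U}
    {Y' : Ω → U'} (h : ∀ ω ω', Y ω = Y ω' → Y' ω = Y' ω') :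
    condEntropy μ X Y ≤ condEntropy μ X Y' := by
  have hY : condEntropy μ X Y = condEntropy μ X (fun ω => (Y ω, Y' ω)) :=
    condEntropy_congr (fun _ _ => Iff.rfl) fun ω ω' => by
      rw [Prod.ext_iff]; exact ⟨fun hω => ⟨hω, h ω ω' hω⟩, And.left⟩
  have hsub := entropy_submodular hμ X Y Y'
  have h1 : entropy μ (fun ω => (Y' ω, X ω, Y ω)) = entropy μ (fun ω => (X ω, Y ω, Y' ω)) :=
    entropy_congr fun ω ω' => by simp only [Prod.ext_iff]; tauto
  have h2 : entropy μ (fun ω => (Y' ω, X ω)) = entropy μ (fun ω => (X ω, Y' ω)) :=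
    entropy_congr fun ω ω' => by simp only [Prod.ext_iff]; tauto
  have h3 : entropy μ (fun ω => (Y' ω, Y ω)) = entropy μ (fun ω => (Y ω, Y' ω)) :=
    entropy_congr fun ω ω' => by simp only [Prod.ext_iff]; tauto
  rw [hY, condEntropy, condEntropy]
  linarith

theorem condEntropy_le_entropy (hμ : ∀ ω, 0 ≤ μ ω) (hμ1 : ∑ ω, μ ω = 1) (X : Ω → V)
    (Y : Ω → U) : condEntropy μ X Y ≤ entropy μ X := by
  have hX : condEntropy μ X (fun _ => ()) = entropy μ X := by
    rw [condEntropy, entropy_const hμ1, sub_zero]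
    exact entropy_congr fun ω ω' => by simp
  exact hX ▸ condEntropy_le_of_determines_right hμ X fun _ _ _ => rfl

end CondEntropy

section JointOn

theorem jointOn_eq_of_subset {Ω β : Type*} {N : ℕ} {s t : Finset (Fin N)} (hst : s ⊆ t)
    {B : Fin N → Ω → β} {ω ω' : Ω} (h : jointOn t B ω = jointOn t B ω') :
    jointOn s B ω = jointOn s B ω' := by
  funext i
  by_cases hi : i ∈ s
  · simpa [jointOn, hi, hst hi] using congrFun h i
  · simp [jointOn, hi]

theorem jointOn_insert_eq_iff {Ω β : Type*} {N : ℕ} (a : Fin N) (s : Finset (Fin N))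
    (B : Fin N → Ω → β) (ω ω' : Ω) :
    jointOn (insert a s) B ω = jointOn (insert a s) B ω' ↔
      B a ω = B a ω' ∧ jointOn s B ω = jointOn s B ω' := by
  refine ⟨fun h => ⟨by simpa [jointOn] using congrFun h a,
    jointOn_eq_of_subset (subset_insert a s) h⟩, fun ⟨ha, hs⟩ => funext fun i => ?_⟩
  by_cases hia : i = a
  · simp [jointOn, hia, ha]
  · simpa [jointOn, hia] using congrFun hs i

variable {Ω : Type*} [Fintype Ω] {μ : Ω → ℝ}
variable {N : ℕ} {β T : Type*} [Fintype β] [Fintype T] [DecidableEq β] [DecidableEq T]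

theorem condEntropy_jointOn_mono (hμ : ∀ ω, 0 ≤ μ ω) (B : Fin N → Ω → β) {s t : Finset (Fin N)}
    (hst : s ⊆ t) (C : Ω → T) : condEntropy μ (jointOn s B) C ≤ condEntropy μ (jointOn t B) C :=
  condEntropy_le_of_determines_left hμ (fun _ _ => jointOn_eq_of_subset hst) C

theorem condEntropy_jointOn_insert (B : Fin N → Ω → β) (a : Fin N) (s : Finset (Fin N))
    (C : Ω → T) :
    condEntropy μ (jointOn (insert a s) B) C =
      condEntropy μ (B a) (fun ω => (jointOn s B ω, C ω)) + condEntropy μ (jointOn s B) C := by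
  rw [← condEntropy_pair_eq_add]
  exact condEntropy_congr (fun ω ω' => by rw [jointOn_insert_eq_iff, Prod.ext_iff])
    fun _ _ => Iff.rfl

theorem condEntropy_given_jointOn_insert {V : Type*} [Fintype V] [DecidableEq V] (X : Ω → V)
    (B : Fin N → Ω → β) (a : Fin N) (s : Finset (Fin N)) (C : Ω → T) :
    condEntropy μ X (fun ω => (jointOn (insert a s) B ω, C ω)) =
      condEntropy μ X (fun ω => (B a ω, jointOn s B ω, C ω)) :=
  condEntropy_congr (fun _ _ => Iff.rfl) fun ω ω' => by
    simp only [Prod.ext_iff, jointOn_insert_eq_iff, and_assoc]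

theorem condEntropy_jointOn_eq_sum (B : Fin N → Ω → β) (C : Ω → T) (Γ : Finset (Fin N)) :
    condEntropy μ (jointOn Γ B) C =
      ∑ i ∈ Γ, condEntropy μ (B i) (fun ω => (jointOn (Γ.filter (· < i)) B ω, C ω)) := by
  induction Γ using Finset.induction_on_max with
  | empty =>
    have hconst : jointOn (∅ : Finset (Fin N)) B = fun _ _ => none := by
      funext ω i
      simp [jointOn]
    rw [hconst, condEntropy_const, sum_empty]
  | insert a s hlt ih =>
    have has : a ∉ s := fun h => lt_irrefl a (hlt a h)
    have hbelow_a : (insert a s).filter (· < a) = s := by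
      rw [filter_insert, if_neg (lt_irrefl a), filter_true_of_mem hlt]
    rw [condEntropy_jointOn_insert, sum_insert has, ih, hbelow_a]
    congr 1
    refine sum_congr rfl fun i hi => ?_
    rw [filter_insert, if_neg (hlt i hi).not_gt]

theorem condEntropy_jointOn_le_sum_entropy (hμ : ∀ ω, 0 ≤ μ ω) (hμ1 : ∑ ω, μ ω = 1)
    (B : Fin N → Ω → β) (C : Ω → T) (Γ : Finset (Fin N)) :
    condEntropy μ (jointOn Γ B) C ≤ ∑ i ∈ Γ, entropy μ (B i) := by
  rw [condEntropy_jointOn_eq_sum]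
  exact sum_le_sum fun i _ => condEntropy_le_entropy hμ hμ1 _ _

/-- Shearer's lemma for conditional entropy. -/
theorem mul_condEntropy_jointOn_le_sum (hμ : ∀ ω, 0 ≤ μ ω) {J : Type*} [Fintype J]
    (s : J → Finset (Fin N)) (k : ℕ) (hs : ∀ i, k ≤ #{j | i ∈ s j}) (B : Fin N → Ω → β)
    (C : Ω → T) :
    k * condEntropy μ (jointOn univ B) C ≤ ∑ j, condEntropy μ (jointOn (s j) B) C := by
  set h : Fin N → ℝ :=
    fun i => condEntropy μ (B i) (fun ω => (jointOn (univ.filter (· < i)) B ω, C ω))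
  have hs_le : ∀ j, ∑ i ∈ s j, h i ≤ condEntropy μ (jointOn (s j) B) C := by
    intro j
    rw [condEntropy_jointOn_eq_sum]
    refine sum_le_sum fun i _ => condEntropy_le_of_determines_right hμ _ fun ω ω' hω => ?_
    rw [Prod.ext_iff] at hω ⊢
    exact ⟨jointOn_eq_of_subset (filter_subset_filter _ (subset_univ _)) hω.1, hω.2⟩
  calc k * condEntropy μ (jointOn univ B) C = ∑ i, k * h i := by
        rw [condEntropy_jointOn_eq_sum, mul_sum]
    _ ≤ ∑ i, #{j | i ∈ s j} * h i :=
        sum_le_sum fun i _ => mul_le_mul_of_nonneg_right (by exact_mod_cast hs i)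
          (condEntropy_nonneg hμ _ _)
    _ = ∑ j, ∑ i ∈ s j, h i := by
        simp only [← nsmul_eq_mul, ← sum_const]
        exact sum_comm' fun i j => by simp
    _ ≤ ∑ j, condEntropy μ (jointOn (s j) B) C := sum_le_sum fun j _ => hs_le j

end JointOn

section CyclicWindow

variable {N K : ℕ}

def cyclicWindow (K : ℕ) (j : Fin N) : Finset (Fin N) :=
  univ.filter fun i => ((i - j : Fin N) : ℕ) < K

theorem card_cyclicWindow (hKN : K ≤ N) (j : Fin N) : #(cyclicWindow K j) = K := by
  have : NeZero N := ⟨j.pos.ne'⟩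
  refine (card_nbij' (t := {i : Fin N | (i : ℕ) < K}) (· - j) (· + j)
    (fun _ => by simp [cyclicWindow]) (fun _ => by simp [cyclicWindow]) (fun _ _ => by simp)
    fun _ _ => by simp).trans ?_
  rw [Fin.card_filter_val_lt, min_eq_right hKN]

theorem card_filter_mem_cyclicWindow (hKN : K ≤ N) (i : Fin N) :
    #{j | i ∈ cyclicWindow K j} = K := by
  have : NeZero N := ⟨i.pos.ne'⟩
  simp only [cyclicWindow, mem_filter, mem_univ, true_and]
  refine (card_nbij' (t := {i : Fin N | (i : ℕ) < K}) (i - ·) (i - ·) (fun _ => by simp)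
    (fun _ => by simp) (fun _ _ => by simp) fun _ _ => by simp).trans ?_
  rw [Fin.card_filter_val_lt, min_eq_right hKN]

end CyclicWindow

theorem div_mul_condEntropy_jointOn_le {Ω : Type*} [Fintype Ω] {μ : Ω → ℝ} {N K : ℕ}
    {β T : Type*} [Fintype β] [Fintype T] [DecidableEq β] [DecidableEq T]
    (hμ : ∀ ω, 0 ≤ μ ω) (hKN : K ≤ N) {B B' : Fin N → Ω → β} (C : Ω → T)
    (h : ∀ Γ : Finset (Fin N), #Γ = K →
      condEntropy μ (jointOn Γ B') C ≤ condEntropy μ (jointOn Γ B) C) :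
    (K : ℝ) / N * condEntropy μ (jointOn univ B') C ≤ condEntropy μ (jointOn univ B) C := by
  rw [div_mul_eq_mul_div]
  refine div_le_of_le_mul₀ N.cast_nonneg (condEntropy_nonneg hμ _ _) ?_
  calc (K : ℝ) * condEntropy μ (jointOn univ B') C
      ≤ ∑ j, condEntropy μ (jointOn (cyclicWindow K j) B') C :=
        mul_condEntropy_jointOn_le_sum hμ (cyclicWindow K) K
          (fun i => (card_filter_mem_cyclicWindow hKN i).ge) B' C
    _ ≤ ∑ j, condEntropy μ (jointOn (cyclicWindow K j) B) C :=
        sum_le_sum fun j _ => h _ (card_cyclicWindow hKN j)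
    _ ≤ ∑ _j : Fin N, condEntropy μ (jointOn univ B) C :=
        sum_le_sum fun _ _ => condEntropy_jointOn_mono hμ B (subset_univ _) C
    _ = condEntropy μ (jointOn univ B) C * N := by simp [mul_comm]

theorem mul_geom_sum_le_of_forall_insert {α : Type*} [Fintype α] [DecidableEq α]
    (f : Finset α → α → ℝ) {L x : ℝ} (hx : 0 ≤ x) (hf : ∀ Λ τ, 0 ≤ f Λ τ)
    (hstep : ∀ Λ τ, τ ∉ Λ → L + f (insert τ Λ) τ ≤ f Λ τ)
    (hswap : ∀ Λ τ τ', x * f Λ τ' ≤ f Λ τ) (k : ℕ) :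
    ∀ Λ : Finset α, #Λ + k = Fintype.card α → ∀ τ ∉ Λ, L * ∑ i ∈ range k, x ^ i ≤ f Λ τ := by
  induction k with
  | zero =>
    intro Λ hΛ τ hτ
    exact absurd (eq_univ_of_card Λ hΛ ▸ mem_univ τ) hτ
  | succ k ih =>
    intro Λ hΛ τ hτ
    have hcard : #(insert τ Λ) + k = Fintype.card α := by
      rw [card_insert_of_notMem hτ]
      omega
    have hrest : x * (L * ∑ i ∈ range k, x ^ i) ≤ f (insert τ Λ) τ := by
      rcases k.eq_zero_or_pos with rfl | hk
      · simpa using hf _ _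
      obtain ⟨τ', hτ'⟩ : ∃ τ', τ' ∉ insert τ Λ := by
        by_contra! hall
        have := card_le_card fun y (_ : y ∈ univ) => hall y
        rw [card_univ] at this
        omega
      exact (mul_le_mul_of_nonneg_left (ih _ hcard τ' hτ') hx).trans (hswap _ τ τ')
    calc L * ∑ i ∈ range (k + 1), x ^ i = L + x * (L * ∑ i ∈ range k, x ^ i) := by
          rw [geom_sum_succ]; ring
      _ ≤ L + f (insert τ Λ) τ := by gcongr
      _ ≤ f Λ τ := hstep Λ τ hτ

theorem coded_pir_capacity_converse_general
    {Ω α γ δ : Type*} [Fintype Ω] [Fintype α] [Fintype γ] [Fintype δ]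
    [DecidableEq α] [DecidableEq γ] [DecidableEq δ]
    (N K M : ℕ) (hKN : K ≤ N) (L : ℝ)
    (μ : Ω → ℝ) (hμ : ∀ ω, 0 ≤ μ ω) (hμ1 : ∑ ω, μ ω = 1)
    (A : Fin M → Fin N → Ω → α) (W : Fin M → Ω → γ) (Q : Ω → δ)
    (hsym : ∀ θ θ' : Fin M, ∀ Λ : Finset (Fin M), ∀ Γ : Finset (Fin N), Γ.card = K →
      condEntropy μ (jointOn Γ (A θ)) (fun ω => (jointOn Λ W ω, Q ω)) =
        condEntropy μ (jointOn Γ (A θ')) (fun ω => (jointOn Λ W ω, Q ω)))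
    (hcorr : ∀ θ : Fin M, ∀ Λ : Finset (Fin M),
      condEntropy μ (W θ)
        (fun ω => (jointOn Finset.univ (A θ) ω, jointOn Λ W ω, Q ω)) = 0)
    (hrec : ∀ Λ : Finset (Fin M), ∀ θ : Fin M, θ ∉ Λ →
      condEntropy μ (W θ) (fun ω => (jointOn Λ W ω, Q ω)) = L) :
    ∀ θ : Fin M,
      (∑ i : Fin N, entropy μ (A θ i) ≥ L * ∑ i ∈ Finset.range M, ((K : ℝ) / N) ^ i) ∧
      (0 < L → L / ∑ i : Fin N, entropy μ (A θ i) ≤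
        (∑ i ∈ Finset.range M, ((K : ℝ) / N) ^ i)⁻¹) := by
  intro θ
  have hbound : L * ∑ i ∈ range M, ((K : ℝ) / N) ^ i ≤ ∑ i, entropy μ (A θ i) := by
    refine (mul_geom_sum_le_of_forall_insert
      (fun Λ τ => condEntropy μ (jointOn univ (A τ)) (fun ω => (jointOn Λ W ω, Q ω)))
      (by positivity) (fun _ _ => condEntropy_nonneg hμ _ _) ?_ ?_ M ∅ (by simp) θ
      (notMem_empty θ)).trans (condEntropy_jointOn_le_sum_entropy hμ hμ1 _ _ _)
    · intro Λ τ hτ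
      rw [condEntropy_eq_add_of_condEntropy_eq_zero (hcorr τ Λ), hrec Λ τ hτ,
        condEntropy_given_jointOn_insert]
    · exact fun Λ τ τ' =>
        div_mul_condEntropy_jointOn_le hμ hKN _ fun Γ hΓ => (hsym τ' τ Λ Γ hΓ).le
  refine ⟨hbound, fun hL => ?_⟩
  have hG : 0 < ∑ i ∈ range M, ((K : ℝ) / N) ^ i := geom_sum_pos (by positivity) θ.pos.ne'
  rw [div_le_iff₀ ((mul_pos hL hG).trans_le hbound), inv_mul_eq_div, le_div_iff₀ hG]
  exact hbound

/-- Converse part of the coded-PIR capacity theorem: the total download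
`∑_i H(A_θ^{(i)})` is at least `L · ∑_{i=0}^{M-1} (K/N)^i`, so the PIR rate is at
most `(1 + K/N + ⋯ + (K/N)^{M-1})⁻¹`. -/
theorem coded_pir_capacity_converse
    {Ω α γ δ : Type*} [Fintype Ω] [Fintype α] [Fintype γ] [Fintype δ]
    [DecidableEq α] [DecidableEq γ] [DecidableEq δ]
    (N K M : ℕ) (hK : 1 ≤ K) (hKN : K ≤ N) (hM : 1 ≤ M) (L : ℝ) (hL : 0 ≤ L)
    (μ : Ω → ℝ) (hμ : ∀ ω, 0 ≤ μ ω) (hμ1 : ∑ ω, μ ω = 1)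
    (A : Fin M → Fin N → Ω → α) (W : Fin M → Ω → γ) (Q : Ω → δ)
    (hsym : ∀ θ θ' : Fin M, ∀ Λ : Finset (Fin M), ∀ Γ : Finset (Fin N), Γ.card = K →
      condEntropy μ (jointOn Γ (A θ)) (fun ω => (jointOn Λ W ω, Q ω)) =
        condEntropy μ (jointOn Γ (A θ')) (fun ω => (jointOn Λ W ω, Q ω)))
    (hcorr : ∀ θ : Fin M, ∀ Λ : Finset (Fin M),
      condEntropy μ (W θ)
        (fun ω => (jointOn Finset.univ (A θ) ω, jointOn Λ W ω, Q ω)) = 0)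
    (hrec : ∀ Λ : Finset (Fin M), ∀ θ : Fin M, θ ∉ Λ →
      condEntropy μ (W θ) (fun ω => (jointOn Λ W ω, Q ω)) = L)
    (hdet : ∀ θ : Fin M,
      condEntropy μ (jointOn Finset.univ (A θ))
        (fun ω => (jointOn Finset.univ W ω, Q ω)) = 0) :
    ∀ θ : Fin M,
      (∑ i : Fin N, entropy μ (A θ i) ≥ L * ∑ i ∈ Finset.range M, ((K : ℝ) / N) ^ i) ∧
      (0 < L → L / ∑ i : Fin N, entropy μ (A θ i) ≤
        (∑ i ∈ Finset.range M, ((K : ℝ) / N) ^ i)⁻¹) :=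
  coded_pir_capacity_converse_general N K M hKN L μ hμ hμ1 A W Q hsym hcorr hrec
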